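/- arXiv:1908.00838 — 7 statements merged into one kernel-verified Lean document; each statement's English description precedes it below -/
import Mathlib

section
/- Let A and P be arbitrary real quaternions, and let e₁ = 1, e₂ = i, e₃ = j, e₄ = k be the standard quaternion basis. Define the 4×4 real matrix M by letting M i j be the j-th real coordinate (in the order re, imI, imJ, imK) of the quaternion A * eᵢ * P. Then M * Mᵀ = (‖A‖² * ‖P‖²) • (identity matrix); in particular the four quaternions A * eᵢ * P are pairwise orthogonal in ℝ⁴ and each has squared Euclidean norm ‖A‖² * ‖P‖². -/
/-!
Multiplication by a quaternion on either side scales the Euclidean inner product of `ℍ ≅ ℝ⁴` by the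
square of its norm: the norm is multiplicative and the inner product is recovered from it by
polarization. So the rows of `M`, the coordinate vectors of `A * eᵢ * P`, are the orthonormal basis
`eᵢ` scaled by `‖A‖ * ‖P‖`.
-/

open Quaternion Matrix

/-- The standard quaternion basis `1, i, j, k`. -/
noncomputable def quatBasis : Fin 4 → ℍ[ℝ]
  | 0 => 1
  | 1 => ⟨0, 1, 0, 0⟩
  | 2 => ⟨0, 0, 1, 0⟩
  | 3 => ⟨0, 0, 0, 1⟩

/-- The real coordinates of a quaternion, in the order `re, imI, imJ, imK`. -/
def quatCoord (x : ℍ[ℝ]) : Fin 4 → ℝ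
  | 0 => x.re
  | 1 => x.imI
  | 2 => x.imJ
  | 3 => x.imK

open scoped RealInnerProductSpace

section NormedDivisionRing

variable {E : Type*} [NormedDivisionRing E] [InnerProductSpace ℝ E]

theorem real_inner_mul_mul_left (a x y : E) : ⟪a * x, a * y⟫ = ‖a‖ ^ 2 * ⟪x, y⟫ := by
  rw [real_inner_eq_norm_add_mul_self_sub_norm_mul_self_sub_norm_mul_self_div_two,
    real_inner_eq_norm_add_mul_self_sub_norm_mul_self_sub_norm_mul_self_div_two, ← mul_add,
    norm_mul, norm_mul, norm_mul]
  ring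

theorem real_inner_mul_mul_right (a x y : E) : ⟪x * a, y * a⟫ = ‖a‖ ^ 2 * ⟪x, y⟫ := by
  rw [real_inner_eq_norm_add_mul_self_sub_norm_mul_self_sub_norm_mul_self_div_two,
    real_inner_eq_norm_add_mul_self_sub_norm_mul_self_sub_norm_mul_self_div_two, ← add_mul,
    norm_mul, norm_mul, norm_mul]
  ring

end NormedDivisionRing

theorem sum_quatCoord_mul (x y : ℍ[ℝ]) : ∑ k, quatCoord x k * quatCoord y k = ⟪x, y⟫ := by
  simp only [Fin.sum_univ_four, quatCoord, inner_def, re_mul, re_star, imI_star, imJ_star, imK_star]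
  ring

theorem orthonormal_quatBasis : Orthonormal ℝ quatBasis := by
  rw [orthonormal_iff_ite]
  intro i j
  rw [← sum_quatCoord_mul]
  fin_cases i <;> fin_cases j <;> simp [Fin.sum_univ_four, quatBasis, quatCoord]

theorem euler_hurwitz_rows (A P : ℍ[ℝ])
    (M : Matrix (Fin 4) (Fin 4) ℝ)
    (hM : ∀ i j, M i j = quatCoord (A * quatBasis i * P) j) :
    M * Mᵀ = (‖A‖ ^ 2 * ‖P‖ ^ 2) • (1 : Matrix (Fin 4) (Fin 4) ℝ) ∧
    (∀ i j : Fin 4, i ≠ j → ∑ k, M i k * M j k = 0) ∧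
    (∀ i : Fin 4, ∑ k, (M i k) ^ 2 = ‖A‖ ^ 2 * ‖P‖ ^ 2) := by
  have rows : ∀ i j, ∑ k, M i k * M j k = if i = j then ‖A‖ ^ 2 * ‖P‖ ^ 2 else 0 := by
    intro i j
    simp only [hM, sum_quatCoord_mul, real_inner_mul_mul_right, real_inner_mul_mul_left,
      orthonormal_iff_ite.mp orthonormal_quatBasis]
    split_ifs <;> ring
  refine ⟨?_, fun i j hij => by simpa [hij] using rows i j, fun i => by simpa [sq] using rows i i⟩
  ext i j
  simpa [Matrix.mul_apply, Matrix.one_apply] using rows i j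
end

section
/- Let A and P be arbitrary real quaternions, and let e₁ = 1, e₂ = i, e₃ = j, e₄ = k be the standard quaternion basis. Define the 4×4 real matrix M by letting M i j be the j-th real coordinate (in the order re, imI, imJ, imK) of the quaternion A * eᵢ * P. Then Mᵀ * M = (‖A‖² * ‖P‖²) • (identity matrix); in particular the columns of M are also pairwise orthogonal with common squared norm ‖A‖² * ‖P‖². -/
open Quaternion Matrix

/-! The map `x ↦ A * x * P` scales inner products by `‖A‖² ‖P‖²` (polarization and
multiplicativity of the norm), and its adjoint is `x ↦ star A * x * star P`. Row `k` of `M` holds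
the coordinates of `A * eₖ * P`, so column `i` holds those of `star A * eᵢ * star P`, and the
Gram matrix of the columns is `‖A‖² ‖P‖²` times that of the basis. -/

open scoped InnerProductSpace

namespace Quaternion

theorem inner_mul_left_eq_inner_star_mul (a x y : ℍ[ℝ]) :
    ⟪a * x, y⟫_ℝ = ⟪x, star a * y⟫_ℝ := by
  simp only [Quaternion.inner_def, star_mul, star_star, re_mul, imI_mul, imJ_mul, imK_mul, re_star,
    imI_star, imJ_star, imK_star]
  ring

theorem inner_mul_right_eq_inner_mul_star (x b y : ℍ[ℝ]) :
    ⟪x * b, y⟫_ℝ = ⟪x, y * star b⟫_ℝ := by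
  simp only [Quaternion.inner_def, star_mul, star_star, mul_assoc]

theorem inner_mul_mul_mul_mul (a b x y : ℍ[ℝ]) :
    ⟪a * x * b, a * y * b⟫_ℝ = ‖a‖ ^ 2 * ‖b‖ ^ 2 * ⟪x, y⟫_ℝ := by
  simp only [real_inner_eq_norm_add_mul_self_sub_norm_mul_self_sub_norm_mul_self_div_two,
    ← add_mul, ← mul_add, norm_mul]
  ring

end Quaternion

theorem quatCoord_eq_inner (x : ℍ[ℝ]) (i : Fin 4) :
    quatCoord x i = ⟪x, quatBasis i⟫_ℝ := by
  simp only [Quaternion.inner_def, re_mul, re_star, imI_star, imJ_star, imK_star]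
  fin_cases i <;> simp [quatCoord, quatBasis]

theorem sum_quatCoord_mul_quatCoord (x y : ℍ[ℝ]) :
    ∑ i, quatCoord x i * quatCoord y i = ⟪x, y⟫_ℝ := by
  simp [Fin.sum_univ_four, quatCoord, Quaternion.inner_def, re_mul]

theorem inner_quatBasis (i j : Fin 4) :
    ⟪quatBasis i, quatBasis j⟫_ℝ = (1 : Matrix (Fin 4) (Fin 4) ℝ) i j := by
  rw [← quatCoord_eq_inner]
  fin_cases i <;> fin_cases j <;> simp [quatBasis, quatCoord, one_apply]

theorem quatCoord_mul_quatBasis_mul (a b : ℍ[ℝ]) (i k : Fin 4) :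
    quatCoord (a * quatBasis k * b) i = quatCoord (star a * quatBasis i * star b) k := by
  rw [quatCoord_eq_inner, quatCoord_eq_inner, inner_mul_right_eq_inner_mul_star,
    inner_mul_left_eq_inner_star_mul, real_inner_comm, mul_assoc]

theorem euler_hurwitz_columns (A P : ℍ[ℝ])
    (M : Matrix (Fin 4) (Fin 4) ℝ)
    (hM : ∀ i j, M i j = quatCoord (A * quatBasis i * P) j) :
    Mᵀ * M = (‖A‖ ^ 2 * ‖P‖ ^ 2) • (1 : Matrix (Fin 4) (Fin 4) ℝ) ∧
    (∀ i j : Fin 4, i ≠ j → ∑ k, M k i * M k j = 0) ∧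
    (∀ i : Fin 4, ∑ k, (M k i) ^ 2 = ‖A‖ ^ 2 * ‖P‖ ^ 2) := by
  have gram : Mᵀ * M = (‖A‖ ^ 2 * ‖P‖ ^ 2) • (1 : Matrix (Fin 4) (Fin 4) ℝ) := by
    ext i j
    calc (Mᵀ * M) i j
        = ∑ k, M k i * M k j := mul_apply
      _ = ∑ k, quatCoord (star A * quatBasis i * star P) k *
            quatCoord (star A * quatBasis j * star P) k := by
          refine Finset.sum_congr rfl fun k _ => ?_
          rw [hM, hM, quatCoord_mul_quatBasis_mul A P i, quatCoord_mul_quatBasis_mul A P j]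
      _ = _ := by
          rw [sum_quatCoord_mul_quatCoord, inner_mul_mul_mul_mul, Quaternion.norm_star,
            Quaternion.norm_star, inner_quatBasis, Matrix.smul_apply, smul_eq_mul]
  refine ⟨gram, fun i j hij => ?_, fun i => ?_⟩
  · simpa [mul_apply, one_apply, hij] using congrFun (congrFun gram i) j
  · simpa [mul_apply, one_apply, sq] using congrFun (congrFun gram i) i
end

section
/- Every rotation of the quaternions is a two-sided multiplication: if f : ℍ ≃ₗᵢ[ℝ] ℍ is a real-linear isometric equivalence of the real quaternions with itself whose determinant (as a linear map on the 4-dimensional real vector space ℍ) equals 1, then there exist quaternions q_L and q_R with ‖q_L‖ = 1 and ‖q_R‖ = 1 such that f x = q_L * x * q_R for all x ∈ ℍ. -/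
/-!
Put `q = f 1` and `g x = q̄ * f x`, an isometry fixing `1`. It preserves the pure quaternions and,
since `x * y + y * x = 2 Re (x * y)` for pure `x, y`, the images `a, b, c` of `i, j, k` again square
to `-1` and pairwise anticommute, which forces `c = ± a * b`. Averaging `φ e * y * e⁻¹` over
`e ∈ {1, i, j, k}` gives `r ≠ 0` with `a * r = r * i` and `b * r = r * j`. If `c = a * b` this
makes `g x = r * x * r⁻¹`; if `c = -(a * b)` the same holds for `g` composed with the reflection
in `k⊥`, and comparing determinants gives `1 = -1`. Normalising `r` to a unit `u` yields
`f x = (q * u) * x * ū`.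
-/

open Quaternion

namespace Quaternion

section CommRing

variable {R : Type*} [CommRing R]

@[simps] def i : ℍ[R] := ⟨0, 1, 0, 0⟩
@[simps] def j : ℍ[R] := ⟨0, 0, 1, 0⟩
@[simps] def k : ℍ[R] := ⟨0, 0, 0, 1⟩

theorem i_mul_i : (i : ℍ[R]) * i = -1 := by ext <;> simp [re_mul, imI_mul, imJ_mul, imK_mul]
theorem j_mul_j : (j : ℍ[R]) * j = -1 := by ext <;> simp [re_mul, imI_mul, imJ_mul, imK_mul]
theorem k_mul_k : (k : ℍ[R]) * k = -1 := by ext <;> simp [re_mul, imI_mul, imJ_mul, imK_mul]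
theorem i_mul_j : (i : ℍ[R]) * j = k := by ext <;> simp [re_mul, imI_mul, imJ_mul, imK_mul]
theorem j_mul_i : (j : ℍ[R]) * i = -k := by ext <;> simp [re_mul, imI_mul, imJ_mul, imK_mul]
theorem j_mul_k : (j : ℍ[R]) * k = i := by ext <;> simp [re_mul, imI_mul, imJ_mul, imK_mul]
theorem k_mul_j : (k : ℍ[R]) * j = -i := by ext <;> simp [re_mul, imI_mul, imJ_mul, imK_mul]
theorem k_mul_i : (k : ℍ[R]) * i = j := by ext <;> simp [re_mul, imI_mul, imJ_mul, imK_mul]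
theorem i_mul_k : (i : ℍ[R]) * k = -j := by ext <;> simp [re_mul, imI_mul, imJ_mul, imK_mul]

/-- `QuaternionAlgebra.basisOneIJK`, typed as a basis of `ℍ[R]` so that it meets the module
structure of `ℍ[R]` syntactically. -/
noncomputable abbrev basisOneIJK : Module.Basis (Fin 4) R ℍ[R] :=
  QuaternionAlgebra.basisOneIJK (-1) 0 (-1)

theorem basisOneIJK_repr (q : ℍ[R]) : basisOneIJK.repr q = ![q.re, q.imI, q.imJ, q.imK] := rfl

theorem coe_basisOneIJK : ⇑(basisOneIJK : Module.Basis (Fin 4) R ℍ[R]) = ![1, i, j, k] := by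
  ext n : 1
  apply basisOneIJK.repr.injective
  ext m
  rw [Module.Basis.repr_self, basisOneIJK_repr]
  fin_cases n <;> fin_cases m <;> simp

theorem linearMap_ext {M : Type*} [AddCommGroup M] [Module R M] {f g : ℍ[R] →ₗ[R] M}
    (h1 : f 1 = g 1) (hi : f i = g i) (hj : f j = g j) (hk : f k = g k) : f = g := by
  refine basisOneIJK.ext fun n => ?_
  fin_cases n <;> simpa [coe_basisOneIJK]

theorem toMatrix_basisOneIJK (T : ℍ[R] →ₗ[R] ℍ[R]) :
    LinearMap.toMatrix basisOneIJK basisOneIJK T =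
      !![(T 1).re, (T i).re, (T j).re, (T k).re;
         (T 1).imI, (T i).imI, (T j).imI, (T k).imI;
         (T 1).imJ, (T i).imJ, (T j).imJ, (T k).imJ;
         (T 1).imK, (T i).imK, (T j).imK, (T k).imK] := by
  ext m n
  fin_cases m <;> fin_cases n <;>
    simp [LinearMap.toMatrix_apply, coe_basisOneIJK, basisOneIJK_repr]

theorem det_mulLeft (w : ℍ[R]) : LinearMap.det (LinearMap.mulLeft R w) = normSq w ^ 2 := by
  rw [← LinearMap.det_toMatrix basisOneIJK, toMatrix_basisOneIJK]
  simp only [LinearMap.mulLeft_apply]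
  simp [Matrix.det_succ_row_zero, Fin.sum_univ_succ, Fin.succAbove, normSq_def']
  ring

theorem det_mulRight (w : ℍ[R]) : LinearMap.det (LinearMap.mulRight R w) = normSq w ^ 2 := by
  rw [← LinearMap.det_toMatrix basisOneIJK, toMatrix_basisOneIJK]
  simp only [LinearMap.mulRight_apply]
  simp [Matrix.det_succ_row_zero, Fin.sum_univ_succ, Fin.succAbove, normSq_def']
  ring

theorem map_mul_eq_mul_of_basis {T : ℍ[R] →ₗ[R] ℍ[R]} {a b r : ℍ[R]} (h1 : T 1 = 1)
    (hi : T i = a) (hj : T j = b) (hk : T k = a * b) (hra : a * r = r * i) (hrb : b * r = r * j)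
    (x : ℍ[R]) : T x * r = r * x := by
  suffices LinearMap.mulRight R r ∘ₗ T = LinearMap.mulLeft R r from LinearMap.congr_fun this x
  refine linearMap_ext ?_ ?_ ?_ ?_ <;>
    simp only [LinearMap.comp_apply, LinearMap.mulRight_apply, LinearMap.mulLeft_apply]
  · rw [h1, one_mul, mul_one]
  · rw [hi, hra]
  · rw [hj, hrb]
  · rw [hk, mul_assoc, hrb, ← mul_assoc, hra, mul_assoc, i_mul_j]

theorem mul_self_of_re_eq_zero {x : ℍ[R]} (hx : x.re = 0) : x * x = ((x * x).re : ℍ[R]) := by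
  ext <;> simp [re_mul, imI_mul, imJ_mul, imK_mul, hx] <;> ring

theorem mul_add_mul_of_re_eq_zero {x y : ℍ[R]} (hx : x.re = 0) (hy : y.re = 0) :
    x * y + y * x = ((2 * (x * y).re : R) : ℍ[R]) := by
  ext <;> simp [re_mul, imI_mul, imJ_mul, imK_mul, hx, hy] <;> ring

variable {a b : ℍ[R]}

/-- The average of `y ↦ φ e * y * e⁻¹` over `e ∈ {1, i, j, k}`, where `φ` is the homomorphism
sending `i, j` to `a, b`. -/
def conjAverage (a b y : ℍ[R]) : ℍ[R] := y - a * (y * i) - b * (y * j) - a * (b * (y * k))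

theorem mul_conjAverage_left (ha : a * a = -1) (y : ℍ[R]) :
    a * conjAverage a b y = conjAverage a b y * i := by
  have haa (x : ℍ[R]) : a * (a * x) = -x := by rw [← mul_assoc, ha, neg_one_mul]
  simp only [conjAverage, mul_sub, sub_mul, mul_assoc, haa, i_mul_i, j_mul_i, k_mul_i, mul_neg,
    mul_one]
  abel

theorem mul_conjAverage_right (hb : b * b = -1) (hab : a * b = -(b * a)) (y : ℍ[R]) :
    b * conjAverage a b y = conjAverage a b y * j := by
  have hbb (x : ℍ[R]) : b * (b * x) = -x := by rw [← mul_assoc, hb, neg_one_mul]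
  have hba (x : ℍ[R]) : b * (a * x) = -(a * (b * x)) := by
    rw [← mul_assoc, ← mul_assoc, hab, neg_mul, neg_neg]
  simp only [conjAverage, mul_sub, sub_mul, mul_assoc, hbb, hba, i_mul_j, j_mul_j, k_mul_j,
    mul_neg, neg_neg, mul_one]
  abel

theorem conjAverage_sum :
    conjAverage a b 1 - conjAverage a b i * i - conjAverage a b j * j - conjAverage a b k * k
      = 4 := by
  simp only [conjAverage, sub_mul, mul_assoc, one_mul, mul_one, i_mul_i, j_mul_i, k_mul_i,
    i_mul_j, j_mul_j, k_mul_j, i_mul_k, j_mul_k, k_mul_k, mul_neg, neg_mul, neg_neg]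
  noncomm_ring
  norm_num

end CommRing

theorem exists_ne_zero_mul_eq_mul {R : Type*} [Field R] [NeZero (2 : R)] {a b : ℍ[R]}
    (ha : a * a = -1) (hb : b * b = -1) (hab : a * b = -(b * a)) :
    ∃ r ≠ 0, a * r = r * i ∧ b * r = r * j := by
  have hne : ∃ y, conjAverage a b y ≠ 0 := by
    by_contra! h
    have h4 : (4 : R) = 0 := congrArg QuaternionAlgebra.re
      (show (4 : ℍ[R]) = 0 by simp [← conjAverage_sum (a := a) (b := b), h])
    exact mul_ne_zero (two_ne_zero (α := R)) two_ne_zero (by rw [← h4]; norm_num)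
  obtain ⟨y, hy⟩ := hne
  exact ⟨_, hy, mul_conjAverage_left ha y, mul_conjAverage_right hb hab y⟩

theorem det_eq_one_of_mul_eq_mul {R : Type*} [Field R] [LinearOrder R] [IsStrictOrderedRing R]
    {T : ℍ[R] →ₗ[R] ℍ[R]} {r : ℍ[R]} (hr : r ≠ 0) (h : ∀ x, T x * r = r * x) :
    LinearMap.det T = 1 := by
  have hT : T = LinearMap.mulRight R r⁻¹ ∘ₗ LinearMap.mulLeft R r :=
    LinearMap.ext fun x => (eq_mul_inv_iff_mul_eq₀ hr).mpr (h x)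
  rw [hT, LinearMap.det_comp, det_mulRight, det_mulLeft, normSq_inv, ← mul_pow,
    inv_mul_cancel₀ (normSq_ne_zero.mpr hr), one_pow]

end Quaternion

theorem eq_or_eq_neg_of_anticomm {A : Type*} [Ring A] [NoZeroDivisors A] {a b c : A}
    (ha : a * a = -1) (hb : b * b = -1) (hc : c * c = -1) (hab : a * b = -(b * a))
    (hac : a * c = -(c * a)) (hbc : b * c = -(c * b)) : c = a * b ∨ c = -(a * b) := by
  have anti {p q : A} (h : p * q = -(q * p)) (z : A) : q * (p * z) = -(p * (q * z)) := by
    rw [← mul_assoc, ← mul_assoc, h, neg_mul, neg_neg]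
  have sq {p : A} (h : p * p = -1) (z : A) : p * (p * z) = -z := by
    rw [← mul_assoc, h, neg_one_mul]
  have habab : a * b * (a * b) = -1 := by
    simp only [mul_assoc, anti hab, sq ha, hb, mul_neg, neg_neg]
  have hu : a * b * c * (a * b * c) = 1 := by
    simp only [mul_assoc, anti hab, anti hac, anti hbc, ha, hb, hc, mul_neg, neg_neg, mul_one]
  have hc' : c = -(a * b * (a * b * c)) := by
    rw [← mul_assoc, habab, neg_one_mul, neg_neg]
  rcases mul_self_eq_one_iff.mp hu with h | h
  · right; rw [hc', h, mul_one]
  · left; rw [hc', h, mul_neg_one, neg_neg]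

namespace Quaternion

open scoped RealInnerProductSpace

section Isometry

variable {g : ℍ[ℝ] →ₗᵢ[ℝ] ℍ[ℝ]} (hg : g 1 = 1) {x y : ℍ[ℝ]}
include hg

theorem re_map_of_map_one (x : ℍ[ℝ]) : (g x).re = x.re := by
  simpa [inner_def, hg] using g.inner_map_map x 1

theorem re_map_mul_map_of_map_one (x : ℍ[ℝ]) (hy : y.re = 0) : (g x * g y).re = (x * y).re := by
  have h := g.inner_map_map x y
  rwa [inner_def, inner_def, star_eq_neg.mpr hy,
    star_eq_neg.mpr ((re_map_of_map_one hg y).trans hy), mul_neg, mul_neg, re_neg, re_neg,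
    neg_inj] at h

theorem map_mul_self_of_map_one (hx : x.re = 0) : g x * g x = x * x := by
  rw [mul_self_of_re_eq_zero ((re_map_of_map_one hg x).trans hx),
    re_map_mul_map_of_map_one hg x hx, ← mul_self_of_re_eq_zero hx]

theorem map_mul_add_map_mul_of_map_one (hx : x.re = 0) (hy : y.re = 0) :
    g x * g y + g y * g x = x * y + y * x := by
  rw [mul_add_mul_of_re_eq_zero ((re_map_of_map_one hg x).trans hx)
    ((re_map_of_map_one hg y).trans hy), re_map_mul_map_of_map_one hg x hy,
    ← mul_add_mul_of_re_eq_zero hx hy]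

end Isometry

theorem reflection_k_apply_of_inner_eq_zero {x : ℍ[ℝ]} (hx : ⟪k, x⟫ = 0) :
    (ℝ ∙ (k : ℍ[ℝ]))ᗮ.reflection x = x :=
  Submodule.reflection_mem_subspace_eq_self
    (Submodule.mem_orthogonal_singleton_iff_inner_right.mpr hx)

theorem det_reflection_k :
    LinearMap.det ((ℝ ∙ (k : ℍ[ℝ]))ᗮ.reflection.toLinearEquiv : ℍ[ℝ] →ₗ[ℝ] ℍ[ℝ]) = -1 := by
  have hk : (k : ℍ[ℝ]) ≠ 0 := fun h => by simpa using congrArg QuaternionAlgebra.imK h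
  rw [Submodule.det_reflection, Submodule.orthogonal_orthogonal, finrank_span_singleton hk,
    pow_one]

theorem exists_ne_zero_mul_eq_mul_of_map_one {g : ℍ[ℝ] →ₗᵢ[ℝ] ℍ[ℝ]} (hg : g 1 = 1) :
    ∃ r ≠ 0, (∀ x, g x * r = r * x) ∨ ∀ x, g ((ℝ ∙ (k : ℍ[ℝ]))ᗮ.reflection x) * r = r * x := by
  have hsq {x : ℍ[ℝ]} (hx : x.re = 0) (h : x * x = -1) : g x * g x = -1 :=
    (map_mul_self_of_map_one hg hx).trans h
  have hanti {x y : ℍ[ℝ]} (hx : x.re = 0) (hy : y.re = 0) (h : x * y = -(y * x)) :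
      g x * g y = -(g y * g x) := by
    rw [← add_eq_zero_iff_eq_neg, map_mul_add_map_mul_of_map_one hg hx hy, h, neg_add_cancel]
  have hi : (i : ℍ[ℝ]).re = 0 := re_i
  have hj : (j : ℍ[ℝ]).re = 0 := re_j
  have hk : (k : ℍ[ℝ]).re = 0 := re_k
  have hij : (i : ℍ[ℝ]) * j = -(j * i) := by rw [i_mul_j, j_mul_i, neg_neg]
  have hik : (i : ℍ[ℝ]) * k = -(k * i) := by rw [i_mul_k, k_mul_i]
  have hjk : (j : ℍ[ℝ]) * k = -(k * j) := by rw [j_mul_k, k_mul_j, neg_neg]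
  obtain ⟨r, hr, hra, hrb⟩ :=
    exists_ne_zero_mul_eq_mul (hsq hi i_mul_i) (hsq hj j_mul_j) (hanti hi hj hij)
  refine ⟨r, hr, ?_⟩
  rcases eq_or_eq_neg_of_anticomm (hsq hi i_mul_i) (hsq hj j_mul_j) (hsq hk k_mul_k)
    (hanti hi hj hij) (hanti hi hk hik) (hanti hj hk hjk) with hgk | hgk
  · exact Or.inl (map_mul_eq_mul_of_basis (T := g.toLinearMap) hg rfl rfl hgk hra hrb)
  · refine Or.inr (map_mul_eq_mul_of_basis
      (T := g.toLinearMap ∘ₗ (ℝ ∙ (k : ℍ[ℝ]))ᗮ.reflection.toLinearEquiv.toLinearMap)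
      ?_ ?_ ?_ ?_ hra hrb)
    all_goals simp only [LinearMap.comp_apply, LinearEquiv.coe_coe,
      LinearIsometryEquiv.coe_toLinearEquiv, LinearIsometry.coe_toLinearMap]
    · rw [reflection_k_apply_of_inner_eq_zero (by simp [inner_def]), hg]
    · rw [reflection_k_apply_of_inner_eq_zero (by simp [inner_def, re_mul])]
    · rw [reflection_k_apply_of_inner_eq_zero (by simp [inner_def, re_mul])]
    · rw [Submodule.reflection_orthogonalComplement_singleton_eq_neg, map_neg, hgk, neg_neg]

theorem exists_ne_zero_mul_eq_mul_of_det_eq_one {g : ℍ[ℝ] →ₗᵢ[ℝ] ℍ[ℝ]} (hg : g 1 = 1)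
    (hdet : LinearMap.det g.toLinearMap = 1) : ∃ r ≠ 0, ∀ x, g x * r = r * x := by
  obtain ⟨r, hr, h | h⟩ := exists_ne_zero_mul_eq_mul_of_map_one hg
  · exact ⟨r, hr, h⟩
  · have h1 := det_eq_one_of_mul_eq_mul
      (T := g.toLinearMap ∘ₗ (ℝ ∙ (k : ℍ[ℝ]))ᗮ.reflection.toLinearEquiv.toLinearMap) hr h
    rw [LinearMap.det_comp, hdet, det_reflection_k] at h1
    norm_num at h1

theorem exists_norm_eq_one_eq_mul_mul_star {T : ℍ[ℝ] → ℍ[ℝ]} {r : ℍ[ℝ]} (hr : r ≠ 0)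
    (h : ∀ x, T x * r = r * x) : ∃ u : ℍ[ℝ], ‖u‖ = 1 ∧ ∀ x, T x = u * x * star u := by
  have hr' : ‖r‖ ≠ 0 := norm_ne_zero_iff.mpr hr
  refine ⟨‖r‖⁻¹ • r, by rw [norm_smul, norm_inv, norm_norm, inv_mul_cancel₀ hr'], fun x => ?_⟩
  rw [(eq_mul_inv_iff_mul_eq₀ hr).mpr (h x), inv_def, normSq_eq_norm_mul_self, star_smul]
  simp only [smul_mul_assoc, mul_smul_comm, smul_smul, mul_inv, mul_assoc]

end Quaternion

/-- Hurwitz: every rotation of `ℍ ≅ ℝ⁴` (linear isometric equivalence of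
determinant 1) is a two-sided multiplication by unit quaternions. -/
theorem so4_eq_two_sided_quaternion_mul (f : ℍ[ℝ] ≃ₗᵢ[ℝ] ℍ[ℝ])
    (hdet : LinearMap.det (f.toLinearEquiv : ℍ[ℝ] →ₗ[ℝ] ℍ[ℝ]) = 1) :
    ∃ qL qR : ℍ[ℝ], ‖qL‖ = 1 ∧ ‖qR‖ = 1 ∧ ∀ x : ℍ[ℝ], f x = qL * x * qR := by
  set q := f 1
  have hq : ‖q‖ = 1 := by rw [f.norm_map, norm_one]
  have hnq : normSq q = 1 := by rw [normSq_eq_norm_mul_self, hq, mul_one]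
  let g : ℍ[ℝ] →ₗᵢ[ℝ] ℍ[ℝ] :=
    { toLinearMap := LinearMap.mulLeft ℝ (star q) ∘ₗ f.toLinearEquiv.toLinearMap
      norm_map' := fun x => by simp [norm_mul, hq] }
  have hg1 : g 1 = 1 := by
    show star q * q = 1
    rw [star_mul_self, hnq, coe_one]
  have hgdet : LinearMap.det g.toLinearMap = 1 := by
    rw [show g.toLinearMap = _ from rfl, LinearMap.det_comp, det_mulLeft, normSq_star, hnq, hdet,
      one_pow, one_mul]
  obtain ⟨r, hr, hgr⟩ := exists_ne_zero_mul_eq_mul_of_det_eq_one hg1 hgdet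
  obtain ⟨u, hu, hgu⟩ := exists_norm_eq_one_eq_mul_mul_star hr hgr
  refine ⟨q * u, star u, by rw [norm_mul, hq, hu, one_mul], by rw [Quaternion.norm_star, hu],
    fun x => ?_⟩
  calc f x = q * (star q * f x) := by rw [← mul_assoc, self_mul_star, hnq, coe_one, one_mul]
    _ = q * u * x * star u := by rw [show star q * f x = g x from rfl, hgu]; simp only [mul_assoc]
end

section
/- Let a, b, c, d, p, q, r, s be elements of a commutative ring satisfying p*r + q*s = 0 and a*(b*(p*q + r*s) + d*(p*s + q*r)) + c*(d*(p*q + r*s) + b*(p*s + q*r)) = 0. Then the sum of squares of the diagonal entries of Euler's parametrised matrix equals the magic constant, i.e. (a*p + b*q + c*r + d*s)² + (a*s + b*r + c*q + d*p)² + (a*q + b*p + c*s + d*r)² + (a*r + b*s + c*p + d*q)² = (a² + b² + c² + d²) * (p² + q² + r² + s²). -/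
/-- Under Euler's two side conditions, the sum of squares of the main-diagonal
entries of Euler's parametrised magic square equals the magic constant. -/
theorem euler_diagonal_condition {R : Type*} [CommRing R]
    (a b c d p q r s : R)
    (h1 : p * r + q * s = 0)
    (h2 : a * (b * (p * q + r * s) + d * (p * s + q * r)) +
          c * (d * (p * q + r * s) + b * (p * s + q * r)) = 0) :
    (a * p + b * q + c * r + d * s) ^ 2 + (a * s + b * r + c * q + d * p) ^ 2 +
    (a * q + b * p + c * s + d * r) ^ 2 + (a * r + b * s + c * p + d * q) ^ 2 =
    (a ^ 2 + b ^ 2 + c ^ 2 + d ^ 2) * (p ^ 2 + q ^ 2 + r ^ 2 + s ^ 2) := by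
  linear_combination 4*h2 + 4*(a*c+b*d)*h1
end

section
/- Let a, b, c, d, p, q, r, s be elements of a commutative ring satisfying p*r + q*s = 0 and a*(b*(p*q + r*s) + d*(p*s + q*r)) + c*(d*(p*q + r*s) + b*(p*s + q*r)) = 0. Then the sum of squares of the anti-diagonal entries of Euler's parametrised matrix equals the magic constant, i.e. (a*q − b*p + c*s − d*r)² + (a*r − b*s + c*p − d*q)² + (−a*p + b*q − c*r + d*s)² + (−a*s + b*r − c*q + d*p)² = (a² + b² + c² + d²) * (p² + q² + r² + s²). -/
/-- Under Euler's two side conditions, the sum of squares of the anti-diagonal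
entries of Euler's parametrised magic square equals the magic constant. -/
theorem euler_antidiagonal_condition {R : Type*} [CommRing R]
    (a b c d p q r s : R)
    (h1 : p * r + q * s = 0)
    (h2 : a * (b * (p * q + r * s) + d * (p * s + q * r)) +
          c * (d * (p * q + r * s) + b * (p * s + q * r)) = 0) :
    (a * q - b * p + c * s - d * r) ^ 2 + (a * r - b * s + c * p - d * q) ^ 2 +
    (-(a * p) + b * q - c * r + d * s) ^ 2 +
    (-(a * s) + b * r - c * q + d * p) ^ 2 =
    (a ^ 2 + b ^ 2 + c ^ 2 + d ^ 2) * (p ^ 2 + q ^ 2 + r ^ 2 + s ^ 2) := by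
  linear_combination (4*(a*c+b*d)) * h1 - 4 * h2
end

section
/- The octonionic norm is multiplicative: for all x, y ∈ ℍ × ℍ with the Cayley–Dickson product, N(x * y) = N(x) * N(y). -/
open Quaternion

/-!
Expanding both components of `x * y` with `‖a ± b‖² = ‖a‖² ± 2⟪a, b⟫ + ‖b‖²` and
`⟪a, b⟫ = Re (a b̄)` leaves the four products `‖xᵢ‖²‖yⱼ‖²` together with the cross terms
`Re (x₁ y₁ x̄₂ y₂)` and `Re (y₂ x₁ y₁ x̄₂)`, which enter with opposite signs. They cancel because `Re (a b) = Re (b a)` for quaternions.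
-/

/-- The Cayley–Dickson product on `ℍ × ℍ`, modelling the octonions. -/
noncomputable def omul (x y : ℍ[ℝ] × ℍ[ℝ]) : ℍ[ℝ] × ℍ[ℝ] :=
  (x.1 * y.1 - star y.2 * x.2, y.2 * x.1 + x.2 * star y.1)

/-- The octonionic norm on `ℍ × ℍ`. -/
noncomputable def onorm (x : ℍ[ℝ] × ℍ[ℝ]) : ℝ := ‖x.1‖ ^ 2 + ‖x.2‖ ^ 2

theorem Quaternion.re_mul_comm {R : Type*} [CommRing R] (a b : ℍ[R]) :
    (a * b).re = (b * a).re := by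
  simp only [re_mul]
  ring

theorem norm_sub_sq_add_norm_add_sq_of_inner_eq {F : Type*} [NormedAddCommGroup F]
    [InnerProductSpace ℝ F] {a b c d : F} (h : inner ℝ a b = inner ℝ c d) :
    ‖a - b‖ ^ 2 + ‖c + d‖ ^ 2 = ‖a‖ ^ 2 + ‖b‖ ^ 2 + ‖c‖ ^ 2 + ‖d‖ ^ 2 := by
  rw [norm_sub_sq_real, norm_add_sq_real, h]
  ring

theorem Quaternion.inner_mul_star_mul_eq_inner_mul_mul_star (x₁ x₂ y₁ y₂ : ℍ[ℝ]) :
    inner ℝ (x₁ * y₁) (star y₂ * x₂) = inner ℝ (y₂ * x₁) (x₂ * star y₁) := by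
  simp only [inner_def, star_mul, star_star]
  rw [mul_assoc y₂, re_mul_comm y₂]
  simp only [mul_assoc]

/-- The octonionic norm is multiplicative. -/
theorem onorm_omul (x y : ℍ[ℝ] × ℍ[ℝ]) :
    onorm (omul x y) = onorm x * onorm y := by
  rw [onorm, omul, norm_sub_sq_add_norm_add_sq_of_inner_eq
    (inner_mul_star_mul_eq_inner_mul_mul_star x.1 x.2 y.1 y.2)]
  simp only [onorm, norm_mul, norm_star]
  ring
end

section
/- Left octonion multiplication scales the inner product by the norm: for all a, x, y ∈ ℍ × ℍ with the Cayley–Dickson product, ⟨a * x, a * y⟩ = N(a) * ⟨x, y⟩, where ⟨·,·⟩ is the standard Euclidean inner product on the 8 real coordinates. In particular, if N(a) = 1 then left multiplication by a is a linear isometry of ℝ⁸ and preserves orthogonality. -/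
open Quaternion

/-- The eight real coordinates of an octonion in `ℍ × ℍ`. -/
def ocoord (x : ℍ[ℝ] × ℍ[ℝ]) : Fin 8 → ℝ
  | 0 => x.1.re
  | 1 => x.1.imI
  | 2 => x.1.imJ
  | 3 => x.1.imK
  | 4 => x.2.re
  | 5 => x.2.imI
  | 6 => x.2.imJ
  | 7 => x.2.imK

/-- The standard Euclidean inner product of the 8 real coordinates. -/
noncomputable def oinner (x y : ℍ[ℝ] × ℍ[ℝ]) : ℝ :=
  ∑ i : Fin 8, ocoord x i * ocoord y i

/-! Write `⟪·,·⟫` for the real inner product of `ℍ`, so that `oinner x y = ⟪x₁, y₁⟫ + ⟪x₂, y₂⟫`.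
Left and right multiplication by a quaternion `q` scale `⟪·,·⟫` by `|q|²` and conjugation preserves
it, so expanding `⟪a x, a y⟫` gives `N(a) ⟪x, y⟫` plus four cross terms. These cancel in pairs,
because `⟪p, q⟫ = Re (p q̄)` and `Re` is invariant under conjugation and cyclic permutation of
products. -/

open scoped InnerProductSpace

namespace Quaternion

theorem re_mul_comm_s10 {R : Type*} [CommRing R] (p q : ℍ[R]) : (p * q).re = (q * p).re := by
  simp only [re_mul]
  ring

theorem inner_star_star (p q : ℍ) : ⟪star p, star q⟫_ℝ = ⟪p, q⟫_ℝ := by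
  rw [inner_def, inner_def, star_star, re_mul_comm_s10, ← re_star, star_mul, star_star]

theorem inner_mul_mul_left (a p q : ℍ) : ⟪a * p, a * q⟫_ℝ = normSq a * ⟪p, q⟫_ℝ := by
  rw [inner_def, inner_def, star_mul, ← mul_assoc, re_mul_comm_s10, ← mul_assoc, ← mul_assoc,
    star_mul_self, mul_assoc, coe_mul_eq_smul, re_smul, smul_eq_mul]

theorem inner_mul_mul_right (a p q : ℍ) : ⟪p * a, q * a⟫_ℝ = normSq a * ⟪p, q⟫_ℝ := by
  rw [inner_def, inner_def, star_mul, mul_assoc, ← mul_assoc a, self_mul_star, coe_mul_eq_smul,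
    mul_smul_comm, re_smul, smul_eq_mul]

theorem inner_mul_star_mul (p q r s : ℍ) : ⟪p * q, star r * s⟫_ℝ = ⟪s * star q, r * p⟫_ℝ := by
  rw [inner_def, inner_def, ← re_star]
  simp only [star_mul, star_star, mul_assoc]
  rw [re_mul_comm_s10]
  simp only [mul_assoc]

end Quaternion

open Quaternion

theorem oinner_eq_inner_add_inner (x y : ℍ × ℍ) : oinner x y = ⟪x.1, y.1⟫_ℝ + ⟪x.2, y.2⟫_ℝ := by
  simp only [oinner, ocoord, Fin.sum_univ_eight, inner_def, re_mul, re_star, imI_star, imJ_star,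
    imK_star]
  ring

theorem onorm_eq_normSq_add_normSq (x : ℍ × ℍ) : onorm x = normSq x.1 + normSq x.2 := by
  rw [onorm, normSq_eq_norm_mul_self, normSq_eq_norm_mul_self, sq, sq]

theorem oinner_omul_omul (a x y : ℍ × ℍ) :
    oinner (omul a x) (omul a y) = onorm a * oinner x y := by
  obtain ⟨a₁, a₂⟩ := a
  obtain ⟨x₁, x₂⟩ := x
  obtain ⟨y₁, y₂⟩ := y
  simp only [oinner_eq_inner_add_inner, onorm_eq_normSq_add_normSq, omul, inner_sub_left,
    inner_sub_right, inner_add_left, inner_add_right, inner_mul_mul_left, inner_mul_mul_right,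
    inner_star_star]
  rw [inner_mul_star_mul a₁ x₁ y₂ a₂, real_inner_comm (a₁ * y₁), inner_mul_star_mul a₁ y₁ x₂ a₂,
    real_inner_comm (x₂ * a₁)]
  ring

/-- Left octonion multiplication scales the inner product by the norm; in
particular left multiplication by a unit octonion preserves the inner product
(so it is a linear isometry of `ℝ⁸` and preserves orthogonality). -/
theorem oinner_omul_left (a x y : ℍ[ℝ] × ℍ[ℝ]) :
    oinner (omul a x) (omul a y) = onorm a * oinner x y ∧
    (onorm a = 1 → oinner (omul a x) (omul a y) = oinner x y) :=
  ⟨oinner_omul_omul a x y, fun ha => by rw [oinner_omul_omul, ha, one_mul]⟩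
end
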